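/- If a Dyck path P has exactly k non-initial contacts, then mir(P) ends with exactly k consecutive down steps, i.e., mir(P) = P' d^k where P' does not end with d (or is empty when appropriate). -/

import Mathlib

/-- A Dyck path: a word in `u = true`, `d = false` with equally many `u`'s and `d`'s,
every prefix of which has at least as many `u`'s as `d`'s. -/
def IsDyck (w : List Bool) : Prop :=
  w.count true = w.count false ∧ ∀ p, p <+: w → p.count false ≤ p.count true

/-- The number of non-initial contacts of a path: the number of nonempty balanced
prefixes. -/
def ncontacts (w : List Bool) : ℕ :=
  ((List.range w.length).filter
    (fun j => (w.take (j + 1)).count true = (w.take (j + 1)).count false)).length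

/-- The involution `mir` on Dyck paths, defined recursively by `mir ε = ε` and
`mir (D₁ u D₂ d) = mir D₂ u mir D₁ d`, where a nonempty Dyck path is uniquely
written `D₁ u D₂ d` with `D₁, D₂` Dyck paths and `D₂` starting right after the
last non-initial contact before the endpoint (so `D₁` is the longest proper
balanced prefix). -/
def mir (w : List Bool) : List Bool :=
  if hw : w = [] then []
  else
    let e := w.dropLast
    let j := ((List.range e.length).filter
      (fun j => (e.take j).count true = (e.take j).count false)).foldr max 0
    mir (e.drop (j + 1)) ++ true :: (mir (e.take j) ++ [false])
termination_by w.length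
decreasing_by
  all_goals
    have hp := List.length_pos_of_ne_nil hw
    simp only [List.length_drop, List.length_take, List.length_dropLast]
    omega

/-!
Split a nonempty Dyck path as `D₁ u D₂ d` with `D₁` its longest balanced proper prefix. Its
non-initial contacts are those of `D₁` together with the endpoint, while
`mir (D₁ u D₂ d) = mir D₂ u mir D₁ d`. By induction `mir D₁` ends in exactly `ncontacts D₁`
down steps, preceded by a word not ending in `d`; the extra final `d` raises the count by one, and
the `u` in front of `mir D₁` stops the run even when that word is empty.
-/

/-- The length of the longest balanced proper prefix of a nonempty `e`: the `j` in the definition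
of `mir`, so that for `e = w.dropLast` the prefix `e.take j` is the path `D₁`. -/
def lastBalancedIndex (e : List Bool) : ℕ :=
  ((List.range e.length).filter
    (fun j => (e.take j).count true = (e.take j).count false)).foldr max 0

theorem mir_eq_of_ne_nil {w : List Bool} (hw : w ≠ []) :
    mir w = mir (w.dropLast.drop (lastBalancedIndex w.dropLast + 1)) ++
      true :: (mir (w.dropLast.take (lastBalancedIndex w.dropLast)) ++ [false]) := by
  rw [mir, dif_neg hw]
  rfl

theorem le_lastBalancedIndex {e : List Bool} {i : ℕ} (hi : i < e.length)
    (hbal : (e.take i).count true = (e.take i).count false) : i ≤ lastBalancedIndex e :=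
  List.le_max_of_le (List.mem_filter.mpr ⟨List.mem_range.mpr hi, decide_eq_true hbal⟩) le_rfl

theorem count_take_lastBalancedIndex {e : List Bool} (he : e ≠ []) :
    (e.take (lastBalancedIndex e)).count true = (e.take (lastBalancedIndex e)).count false := by
  set S := (List.range e.length).filter
    (fun j => (e.take j).count true = (e.take j).count false)
  have hS : S ≠ [] := List.ne_nil_of_mem (a := 0)
    (List.mem_filter.mpr ⟨List.mem_range.mpr (List.length_pos_iff.mpr he), by simp⟩)
  have hmem : lastBalancedIndex e ∈ S := List.maximum_mem (List.foldr_max_of_ne_nil hS).symm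
  exact of_decide_eq_true (List.mem_filter.mp hmem).2

theorem ncontacts_append_singleton (w : List Bool) (b : Bool) :
    ncontacts (w ++ [b]) =
      ncontacts w + if (w ++ [b]).count true = (w ++ [b]).count false then 1 else 0 := by
  have hprefix : ∀ i ∈ List.range w.length, (w ++ [b]).take (i + 1) = w.take (i + 1) :=
    fun i hi => List.take_append_of_le_length (List.mem_range.mp hi)
  have hfull : (w ++ [b]).take (w.length + 1) = w ++ [b] := List.take_of_length_le (by simp)
  unfold ncontacts
  rw [List.length_append, List.length_singleton, List.range_succ, List.filter_append,
    List.filter_congr (fun i hi => by rw [hprefix i hi]), List.filter_singleton, hfull,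
    List.length_append]
  by_cases hbal : (w ++ [b]).count true = (w ++ [b]).count false <;>
    simp only [hbal, decide_true, decide_false, cond_true, cond_false] <;> rfl

theorem ncontacts_append_of_forall_ne {u v : List Bool}
    (h : ∀ i, 0 < i → i ≤ v.length → (u ++ v.take i).count true ≠ (u ++ v.take i).count false) :
    ncontacts (u ++ v) = ncontacts u := by
  induction v using List.reverseRecOn with
  | nil => simp
  | append_singleton v b ih =>
    have hlast := h (v.length + 1) (by omega) (by simp)
    rw [List.take_of_length_le (by simp), ← List.append_assoc] at hlast
    rw [← List.append_assoc, ncontacts_append_singleton, if_neg hlast, add_zero]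
    refine ih fun i hi hiv => ?_
    simpa [List.take_append_of_le_length hiv] using h i hi (by simp; omega)

namespace IsDyck

variable {w : List Bool}

theorem of_prefix {p : List Bool} (h : IsDyck w) (hp : p <+: w)
    (hbal : p.count true = p.count false) : IsDyck p :=
  ⟨hbal, fun q hq => h.2 q (hq.trans hp)⟩

theorem dropLast_append_false (h : IsDyck w) (hw : w ≠ []) : w.dropLast ++ [false] = w := by
  have hsplit := List.dropLast_append_getLast hw
  have hbal := h.1
  have hdrop := h.2 _ (List.dropLast_prefix w)
  cases hb : w.getLast hw
  · rwa [hb] at hsplit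
  · rw [← hsplit, hb] at hbal
    simp [List.count_append] at hbal
    omega

theorem count_dropLast (h : IsDyck w) (hw : w ≠ []) :
    w.dropLast.count true = w.dropLast.count false + 1 := by
  have hbal := h.1
  rw [← h.dropLast_append_false hw] at hbal
  simpa [List.count_append] using hbal

theorem dropLast_ne_nil (h : IsDyck w) (hw : w ≠ []) : w.dropLast ≠ [] := by
  intro he
  simpa [he] using h.count_dropLast hw

theorem take_lastBalancedIndex (h : IsDyck w) (hw : w ≠ []) :
    IsDyck (w.dropLast.take (lastBalancedIndex w.dropLast)) :=
  h.of_prefix ((List.take_prefix _ _).trans (List.dropLast_prefix w))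
    (count_take_lastBalancedIndex (h.dropLast_ne_nil hw))

theorem ncontacts_eq_ncontacts_take_add_one (h : IsDyck w) (hw : w ≠ []) :
    ncontacts w = ncontacts (w.dropLast.take (lastBalancedIndex w.dropLast)) + 1 := by
  have he := h.count_dropLast hw
  conv_lhs => rw [← h.dropLast_append_false hw, ncontacts_append_singleton,
    if_pos (by simpa [List.count_append] using he),
    ← List.take_append_drop (lastBalancedIndex w.dropLast) w.dropLast]
  set e := w.dropLast
  set j := lastBalancedIndex e
  congr 1
  refine ncontacts_append_of_forall_ne fun i hi hie hbal => ?_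
  rw [← List.take_add] at hbal
  rw [List.length_drop] at hie
  rcases (show j + i ≤ e.length by omega).lt_or_eq with hlt | heq
  · have := le_lastBalancedIndex hlt hbal
    omega
  · rw [heq, List.take_length] at hbal
    omega

end IsDyck

theorem List.getLast?_append_cons_ne {α : Type*} {l l' : List α} {a b : α} (hab : a ≠ b)
    (hl' : l'.getLast? ≠ some b) : (l ++ a :: l').getLast? ≠ some b := by
  cases hlast : l'.getLast? <;> simp_all [List.getLast?_append, List.getLast?_cons]

theorem stmt10 (P : List Bool) (h : IsDyck P) :
    ∃ P', mir P = P' ++ List.replicate (ncontacts P) false ∧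
      P'.getLast? ≠ some false := by
  induction hn : P.length using Nat.strong_induction_on generalizing P with
  | _ n ih =>
    rcases eq_or_ne P [] with rfl | hP
    · exact ⟨[], by rw [mir]; simp [ncontacts], by simp⟩
    have hlen : (P.dropLast.take (lastBalancedIndex P.dropLast)).length < n := by
      have := List.length_pos_iff.mpr hP
      simp only [List.length_take, List.length_dropLast]
      omega
    obtain ⟨P₁, hmir, hlast⟩ := ih _ hlen _ (h.take_lastBalancedIndex hP) rfl
    refine ⟨mir (P.dropLast.drop (lastBalancedIndex P.dropLast + 1)) ++ true :: P₁, ?_,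
      List.getLast?_append_cons_ne (by decide) hlast⟩
    rw [mir_eq_of_ne_nil hP, hmir, h.ncontacts_eq_ncontacts_take_add_one hP, List.replicate_succ']
    simp
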